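/- Let T = conv{A₁,A₂,A₃} ⊂ ℝ² be a triangle with affinely independent vertices, let D be a point in the relative interior of e₁ = [A₂,A₃] and E a point in the relative interior of e₂ = [A₁,A₃], let K = conv{E,D,A₃}, let t be a unit vector parallel to D − E, n a unit vector orthogonal to t, and x_T a point of [D,E]. Suppose (φ₁,φ₂) ∈ RT × RT satisfies ⟨φ₁(x) − φ₂(x), n⟩ = 0 for every x on [D,E] and div φ₁ = div φ₂, and set μ = ⟨φ₁(x_T) − φ₂(x_T), t⟩. Then for s = 1,2: φ_s = Σᵢ Nᵢ(φ) λᵢ + μ·(ω_s − Πω), where ω₁ = t (the constant field), ω₂ = 0, and Πω = Σᵢ Nᵢ(ω) λᵢ. -/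

import Mathlib

open Real MeasureTheory RealInnerProductSpace

noncomputable section

abbrev V2 : Type := EuclideanSpace ℝ (Fin 2)

/-- The lowest-order Raviart–Thomas shape function with data `(c, b)`: `x ↦ c + b • x`
(its divergence is the constant `2 * b`). -/
def rt (c : V2) (b : ℝ) : V2 → V2 := fun x => c + b • x

/-- Arclength line integral of a scalar function over the segment `[P, Q]`. -/
def lineInt (f : V2 → ℝ) (P Q : V2) : ℝ :=
  (∫ s in (0:ℝ)..1, f (P + s • (Q - P))) * ‖Q - P‖

/-- First degree of freedom of the piecewise pair `(φ₁, φ₂)` (with `φ₁` on `K` and `φ₂` on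
`T∖K`): `N₁(φ) = (1/|e₁|)(∫_{[A₂,D]} φ₂·n₁ ds + ∫_{[D,A₃]} φ₁·n₁ ds)`. -/
def dof1 (A₂ A₃ D n₁ : V2) (c₁ : V2) (b₁ : ℝ) (c₂ : V2) (b₂ : ℝ) : ℝ :=
  (1 / ‖A₃ - A₂‖) *
    (lineInt (fun x => ⟪rt c₂ b₂ x, n₁⟫) A₂ D + lineInt (fun x => ⟪rt c₁ b₁ x, n₁⟫) D A₃)

/-- `N₂(φ) = (1/|e₂|)(∫_{[A₁,E]} φ₂·n₂ ds + ∫_{[E,A₃]} φ₁·n₂ ds)`. -/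
def dof2 (A₁ A₃ E n₂ : V2) (c₁ : V2) (b₁ : ℝ) (c₂ : V2) (b₂ : ℝ) : ℝ :=
  (1 / ‖A₃ - A₁‖) *
    (lineInt (fun x => ⟪rt c₂ b₂ x, n₂⟫) A₁ E + lineInt (fun x => ⟪rt c₁ b₁ x, n₂⟫) E A₃)

/-- `N₃(φ) = (1/|e₃|) ∫_{[A₁,A₂]} φ₂·n₃ ds`. -/
def dof3 (A₁ A₂ n₃ : V2) (c₂ : V2) (b₂ : ℝ) : ℝ :=
  (1 / ‖A₂ - A₁‖) * lineInt (fun x => ⟪rt c₂ b₂ x, n₃⟫) A₁ A₂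

/-- The IFE interface conditions for the pair `(φ₁, φ₂) = (rt c₁ b₁, rt c₂ b₂)`:
(i) `⟨φ₁(x) - φ₂(x), n⟩ = 0` on the segment `[D, E]`;
(ii) `β₁⟨φ₁(x_T), t⟩ = β₂⟨φ₂(x_T), t⟩`;
(iii) `div φ₁ = div φ₂`. -/
def ifeCond (D E xT t n : V2) (β₁ β₂ : ℝ) (c₁ : V2) (b₁ : ℝ) (c₂ : V2) (b₂ : ℝ) : Prop :=
  (∀ x ∈ segment ℝ D E, ⟪rt c₁ b₁ x - rt c₂ b₂ x, n⟫ = 0) ∧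
    β₁ * ⟪rt c₁ b₁ xT, t⟫ = β₂ * ⟪rt c₂ b₂ xT, t⟫ ∧
    2 * b₁ = 2 * b₂

/-- Area of the triangle `conv{A₁, A₂, A₃}`. -/
def triArea (A₁ A₂ A₃ : V2) : ℝ :=
  (volume (convexHull ℝ ({A₁, A₂, A₃} : Set V2))).toReal

/-- `λ₁(x) = (|e₁|/(2|T|))(x - A₁)`. -/
def lam1 (A₁ A₂ A₃ : V2) : V2 → V2 := fun x =>
  (‖A₃ - A₂‖ / (2 * triArea A₁ A₂ A₃)) • (x - A₁)

/-- `λ₂(x) = (|e₂|/(2|T|))(x - A₂)`. -/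
def lam2 (A₁ A₂ A₃ : V2) : V2 → V2 := fun x =>
  (‖A₃ - A₁‖ / (2 * triArea A₁ A₂ A₃)) • (x - A₂)

/-- `λ₃(x) = (|e₃|/(2|T|))(x - A₃)`. -/
def lam3 (A₁ A₂ A₃ : V2) : V2 → V2 := fun x =>
  (‖A₂ - A₁‖ / (2 * triArea A₁ A₂ A₃)) • (x - A₃)

/-- The Raviart–Thomas function `Σᵢ Nᵢ λᵢ` with prescribed degrees of freedom `N₁ N₂ N₃`. -/
def rtInterp (A₁ A₂ A₃ : V2) (N₁ N₂ N₃ : ℝ) : V2 → V2 := fun x =>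
  N₁ • lam1 A₁ A₂ A₃ x + N₂ • lam2 A₁ A₂ A₃ x + N₃ • lam3 A₁ A₂ A₃ x

/-- The Raviart–Thomas interpolant `Πω = Σᵢ Nᵢ(ω) λᵢ` of the piecewise field `ω` equal to
`t` on `K = conv{E, D, A₃}` and `0` on `T∖K`, where `N₁(ω) = (|DA₃|/|e₁|)⟨t, n₁⟩`,
`N₂(ω) = (|EA₃|/|e₂|)⟨t, n₂⟩` and `N₃(ω) = 0`. -/
def piOmega (A₁ A₂ A₃ D E t n₁ n₂ : V2) : V2 → V2 := fun x =>
  ((‖A₃ - D‖ / ‖A₃ - A₂‖) * ⟪t, n₁⟫) • lam1 A₁ A₂ A₃ x +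
    ((‖A₃ - E‖ / ‖A₃ - A₁‖) * ⟪t, n₂⟫) • lam2 A₁ A₂ A₃ x

/-!
Equal divergences give `b₁ = b₂`, and the vanishing normal jump on `[D, E]` makes `c₁ - c₂`
orthogonal to `n`, hence equal to `μ t`; so `φ₁ = φ₂ + μ t`. As the midpoint rule is exact
for affine integrands, the fluxes of `φ₂` through `[A₂, D]` and `[D, A₃]` add up to its flux
through `e₁`, whence `Nᵢ(φ) = Nᵢ(φ₂) + μ Nᵢ(ω)` and it remains to see that Raviart–Thomas
interpolation reproduces `φ₂`. Writing each outward unit normal through the planar cross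
product (the orientation fixes its sign), the scaled fluxes `(|eᵢ| / (2|T|)) ⟨y, nᵢ⟩` become
`± cross y eᵢ / cross (A₂ - A₁) (A₃ - A₁)`, which turns this into a polynomial identity.
-/

theorem eq_inner_smul_of_inner_eq_zero {E : Type*} [NormedAddCommGroup E]
    [InnerProductSpace ℝ E] [FiniteDimensional ℝ E] (hE : Module.finrank ℝ E = 2) {t n v : E}
    (ht : ‖t‖ = 1) (hn : ‖n‖ = 1) (hnt : ⟪t, n⟫ = 0) (hv : ⟪v, n⟫ = 0) : v = ⟪v, t⟫ • t := by
  have hon : Orthonormal ℝ ![t, n] := by simp [ht, hn, hnt]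
  let b := OrthonormalBasis.mk hon
    (hon.linearIndependent.span_eq_top_of_card_eq_finrank' (by simp [hE])).ge
  have hv' : ⟪n, v⟫ = 0 := by rwa [real_inner_comm]
  simpa [b, Fin.sum_univ_two, hv', real_inner_comm] using (b.sum_repr' v).symm

theorem ne_ne_ne_of_affineIndependent {k V P : Type*} [Ring k] [Nontrivial k] [AddCommGroup V]
    [Module k V] [AddTorsor V P] {A₁ A₂ A₃ : P} (hA : AffineIndependent k ![A₁, A₂, A₃]) :
    A₁ ≠ A₂ ∧ A₁ ≠ A₃ ∧ A₂ ≠ A₃ :=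
  ⟨by simpa using hA.injective.ne (show (0 : Fin 3) ≠ 1 by decide),
    by simpa using hA.injective.ne (show (0 : Fin 3) ≠ 2 by decide),
    by simpa using hA.injective.ne (show (1 : Fin 3) ≠ 2 by decide)⟩

def cross (u v : V2) : ℝ := u 0 * v 1 - u 1 * v 0

lemma cross_swap (u v : V2) : cross v u = -cross u v := by
  simp only [cross]; ring

lemma cross_sub_sub_rotate (A B C : V2) : cross (C - B) (A - B) = cross (B - A) (C - A) := by
  simp only [cross, PiLp.sub_apply]; ring

lemma inner_eq_coords (a b : V2) : ⟪a, b⟫ = a 0 * b 0 + a 1 * b 1 := by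
  simp [PiLp.inner_apply, Fin.sum_univ_two, mul_comm]

lemma norm_sq_eq_coords (a : V2) : ‖a‖ ^ 2 = a 0 ^ 2 + a 1 ^ 2 := by
  rw [← real_inner_self_eq_norm_sq, inner_eq_coords]; ring

lemma exists_inner_eq_mul_cross {m w : V2} (hw : w ≠ 0) (h : ⟪m, w⟫ = 0) :
    ∃ k : ℝ, (∀ y, ⟪y, m⟫ = k * cross y w) ∧ ‖m‖ = |k| * ‖w‖ := by
  have hq : w 0 ^ 2 + w 1 ^ 2 ≠ 0 := by
    rw [← norm_sq_eq_coords]; positivity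
  rw [inner_eq_coords] at h
  refine ⟨(m 0 * w 1 - m 1 * w 0) / (w 0 ^ 2 + w 1 ^ 2), fun y => ?_, ?_⟩
  · rw [inner_eq_coords, cross]
    field_simp
    linear_combination (y 0 * w 0 + y 1 * w 1) * h
  · rw [← abs_norm, ← abs_norm w, ← abs_mul, ← sq_eq_sq_iff_abs_eq_abs, mul_pow,
      norm_sq_eq_coords, norm_sq_eq_coords]
    field_simp
    linear_combination (m 0 * w 0 + m 1 * w 1) * h

lemma cross_ne_zero_of_outward_normal {m P Q R : V2} (hPQ : P ≠ Q) (he : ⟪m, Q - P⟫ = 0)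
    (ho : ⟪m, R - P⟫ < 0) : cross (Q - P) (R - P) ≠ 0 := by
  obtain ⟨k, hk, -⟩ := exists_inner_eq_mul_cross (sub_ne_zero.mpr hPQ.symm) he
  intro h
  have : cross (R - P) (Q - P) = 0 := by rw [cross_swap, h, neg_zero]
  rw [real_inner_comm, hk, this, mul_zero] at ho
  exact ho.false

-- `m = k • (Q - P)^⊥` with `|k| ‖Q - P‖ = 1`, and the outward orientation forces
-- `k` to have the sign of `cross (Q - P) (R - P)`.
lemma inner_outward_normal_mul {m P Q R : V2} (hPQ : P ≠ Q) (hm : ‖m‖ = 1)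
    (he : ⟪m, Q - P⟫ = 0) (ho : ⟪m, R - P⟫ < 0) (y : V2) :
    ⟪y, m⟫ * (‖Q - P‖ / |cross (Q - P) (R - P)|) = cross y (Q - P) / cross (Q - P) (R - P) := by
  obtain ⟨k, hk, hkn⟩ := exists_inner_eq_mul_cross (sub_ne_zero.mpr hPQ.symm) he
  have hc := cross_ne_zero_of_outward_normal hPQ he ho
  have hkc : 0 < k * cross (Q - P) (R - P) := by
    rw [real_inner_comm, hk] at ho
    simp only [cross] at ho ⊢
    linarith
  rw [hm] at hkn
  rw [hk]
  rcases hc.lt_or_gt with hneg | hpos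
  · rw [abs_of_neg hneg, abs_of_neg (by nlinarith : k < 0)] at *
    field_simp
    linear_combination -cross y (Q - P) * hkn
  · rw [abs_of_pos hpos, abs_of_pos (by nlinarith : 0 < k)] at *
    field_simp
    linear_combination -cross y (Q - P) * hkn

def pairLinearMap (u v : V2) : V2 →ₗ[ℝ] V2 where
  toFun x := x 0 • u + x 1 • v
  map_add' x y := by
    simp only [PiLp.add_apply, add_smul]
    abel
  map_smul' c x := by
    simp only [PiLp.smul_apply, smul_eq_mul, RingHom.id_apply, smul_add, smul_smul]

lemma pairLinearMap_apply (u v x : V2) : pairLinearMap u v x = x 0 • u + x 1 • v := rfl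

lemma det_pairLinearMap (u v : V2) : LinearMap.det (pairLinearMap u v) = cross u v := by
  rw [← LinearMap.det_toMatrix (EuclideanSpace.basisFun (Fin 2) ℝ).toBasis, Matrix.det_fin_two,
    cross]
  simp [LinearMap.toMatrix_apply, pairLinearMap_apply]
  ring

def stdTriangle : Set V2 := {x | 0 ≤ x 0 ∧ 0 ≤ x 1 ∧ x 0 + x 1 ≤ 1}

lemma volume_stdTriangle_prod :
    volume {p : ℝ × ℝ | 0 ≤ p.1 ∧ 0 ≤ p.2 ∧ p.1 + p.2 ≤ 1} = ENNReal.ofReal (1 / 2) := by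
  have hm : MeasurableSet {p : ℝ × ℝ | 0 ≤ p.1 ∧ 0 ≤ p.2 ∧ p.1 + p.2 ≤ 1} :=
    (measurable_fst measurableSet_Ici).inter ((measurable_snd measurableSet_Ici).inter
      ((measurable_fst.add measurable_snd) measurableSet_Iic))
  have hslice (x : ℝ) :
      volume (Prod.mk x ⁻¹' {p : ℝ × ℝ | 0 ≤ p.1 ∧ 0 ≤ p.2 ∧ p.1 + p.2 ≤ 1}) =
        (Set.Icc (0 : ℝ) 1).indicator (fun x => ENNReal.ofReal (1 - x)) x := by
    by_cases hx : x ∈ Set.Icc (0 : ℝ) 1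
    · have : Prod.mk x ⁻¹' {p : ℝ × ℝ | 0 ≤ p.1 ∧ 0 ≤ p.2 ∧ p.1 + p.2 ≤ 1} =
          Set.Icc 0 (1 - x) := by
        ext y
        simp only [Set.mem_preimage, Set.mem_ofPred_eq, Set.mem_Icc]
        constructor
        · rintro ⟨-, h2, h3⟩; exact ⟨h2, by linarith⟩
        · rintro ⟨h2, h3⟩; exact ⟨hx.1, h2, by linarith⟩
      rw [this, Real.volume_Icc, Set.indicator_of_mem hx, sub_zero]
    · have : Prod.mk x ⁻¹' {p : ℝ × ℝ | 0 ≤ p.1 ∧ 0 ≤ p.2 ∧ p.1 + p.2 ≤ 1} = ∅ := by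
        ext y
        simp only [Set.mem_Icc, not_and_or, not_le] at hx
        simp only [Set.mem_preimage, Set.mem_ofPred_eq, Set.mem_empty_iff_false, iff_false]
        rintro ⟨h1, h2, h3⟩
        rcases hx with h | h <;> linarith
      rw [this, Set.indicator_of_notMem hx, measure_empty]
  rw [Measure.volume_eq_prod, Measure.prod_apply hm]
  simp_rw [hslice]
  rw [lintegral_indicator measurableSet_Icc, ← ofReal_integral_eq_lintegral_ofReal,
    integral_Icc_eq_integral_Ioc, ← intervalIntegral.integral_of_le zero_le_one]
  · rw [intervalIntegral.integral_sub intervalIntegrable_const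
      intervalIntegral.intervalIntegrable_id]
    norm_num [integral_id]
  · exact (continuous_const.sub continuous_id).integrableOn_Icc
  · filter_upwards [ae_restrict_mem measurableSet_Icc] with x hx
    simpa using hx.2

lemma volume_stdTriangle : volume stdTriangle = ENNReal.ofReal (1 / 2) := by
  have hmp : MeasurePreserving
      (MeasurableEquiv.finTwoArrow ∘ (MeasurableEquiv.toLp 2 (Fin 2 → ℝ)).symm)
      (volume : Measure V2) volume :=
    (volume_preserving_finTwoArrow ℝ).comp
      (EuclideanSpace.volume_preserving_symm_measurableEquiv_toLp (Fin 2))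
  have hpre : stdTriangle =
      (MeasurableEquiv.finTwoArrow ∘ (MeasurableEquiv.toLp 2 (Fin 2 → ℝ)).symm) ⁻¹'
        {p : ℝ × ℝ | 0 ≤ p.1 ∧ 0 ≤ p.2 ∧ p.1 + p.2 ≤ 1} := by
    ext x
    simp [stdTriangle, MeasurableEquiv.finTwoArrow]
  rw [hpre, hmp.measure_preimage (by measurability), volume_stdTriangle_prod]

lemma convex_stdTriangle : Convex ℝ stdTriangle := by
  rintro x ⟨hx0, hx1, hxs⟩ y ⟨hy0, hy1, hys⟩ a b ha hb hab
  refine ⟨?_, ?_, ?_⟩ <;> simp only [PiLp.add_apply, PiLp.smul_apply, smul_eq_mul]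
  · positivity
  · positivity
  · nlinarith [mul_le_mul_of_nonneg_left hxs ha, mul_le_mul_of_nonneg_left hys hb]

lemma stdTriangle_eq_convexHull :
    stdTriangle = convexHull ℝ {0, EuclideanSpace.single 0 1, EuclideanSpace.single 1 1} := by
  apply le_antisymm
  · rintro x ⟨h0, h1, hs⟩
    rw [convexHull_insert (by simp), mem_convexJoin]
    rcases (add_nonneg h0 h1).eq_or_lt with hσ | hσ
    · refine ⟨0, rfl, EuclideanSpace.single 0 1, subset_convexHull ℝ _ (by simp), ?_⟩
      have : x = 0 := by ext i; fin_cases i <;> simp <;> linarith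
      rw [this]
      exact left_mem_segment ℝ _ _
    · set σ := x 0 + x 1
      refine ⟨0, rfl, (x 0 / σ) • EuclideanSpace.single 0 1 +
        (x 1 / σ) • EuclideanSpace.single 1 1, ?_, 1 - σ, σ, by linarith, by linarith, by ring, ?_⟩
      · rw [convexHull_pair]
        exact ⟨x 0 / σ, x 1 / σ, by positivity, by positivity,
          by rw [← add_div, div_self hσ.ne'], rfl⟩
      · ext i
        fin_cases i <;> simp [smul_smul] <;> field_simp
  · apply convexHull_min _ convex_stdTriangle
    rintro p (rfl | rfl | rfl) <;> simp [stdTriangle]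

open Pointwise in
lemma triArea_eq_abs_cross (A₁ A₂ A₃ : V2) :
    triArea A₁ A₂ A₃ = |cross (A₂ - A₁) (A₃ - A₁)| / 2 := by
  set L := pairLinearMap (A₂ - A₁) (A₃ - A₁)
  have hvert : ({A₁, A₂, A₃} : Set V2) =
      (A₁ +ᵥ ·) '' (L '' {0, EuclideanSpace.single 0 1, EuclideanSpace.single 1 1}) := by
    have h₂ : L (EuclideanSpace.single 0 1) = A₂ - A₁ := by simp [L, pairLinearMap_apply]
    have h₃ : L (EuclideanSpace.single 1 1) = A₃ - A₁ := by simp [L, pairLinearMap_apply]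
    simp only [Set.image_insert_eq, Set.image_singleton, map_zero, h₂, h₃, vadd_eq_add, add_zero,
      add_sub_cancel]
  have hhull : convexHull ℝ ({A₁, A₂, A₃} : Set V2) = A₁ +ᵥ (L '' stdTriangle) := by
    rw [hvert, stdTriangle_eq_convexHull, L.image_convexHull]
    exact ((AffineEquiv.constVAdd ℝ V2 A₁).toAffineMap.image_convexHull _).symm
  rw [triArea, hhull, measure_vadd, Measure.addHaar_image_linearMap, det_pairLinearMap,
    volume_stdTriangle, ← ENNReal.ofReal_mul (abs_nonneg _), ENNReal.toReal_ofReal (by positivity)]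
  ring

lemma inner_smul_scaled_eq {m P Q R : V2} {a : ℝ} (hPQ : P ≠ Q) (hm : ‖m‖ = 1)
    (he : ⟪m, Q - P⟫ = 0) (ho : ⟪m, R - P⟫ < 0) (ha : 2 * a = |cross (Q - P) (R - P)|)
    (y v : V2) :
    ⟪y, m⟫ • ((‖Q - P‖ / (2 * a)) • v) = (cross y (Q - P) / cross (Q - P) (R - P)) • v := by
  rw [smul_smul, ha, inner_outward_normal_mul hPQ hm he ho]

lemma rt_sub_rt (c₁ c₂ : V2) (b : ℝ) (x : V2) : rt c₁ b x - rt c₂ b x = c₁ - c₂ := by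
  simp only [rt]; abel

lemma rt_add_smul (c t : V2) (μ b : ℝ) (x : V2) : rt (c + μ • t) b x = rt c b x + μ • t := by
  simp only [rt]; abel

lemma rt_eq_sum_cross_smul {A₁ A₂ A₃ : V2} (hd : cross (A₂ - A₁) (A₃ - A₁) ≠ 0) (c : V2)
    (b : ℝ) (x : V2) :
    (cross (rt c b (midpoint ℝ A₂ A₃)) (A₃ - A₂) / cross (A₃ - A₂) (A₁ - A₂)) • (x - A₁) +
      (cross (rt c b (midpoint ℝ A₁ A₃)) (A₃ - A₁) / cross (A₃ - A₁) (A₂ - A₁)) • (x - A₂) +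
      (cross (rt c b (midpoint ℝ A₁ A₂)) (A₂ - A₁) / cross (A₂ - A₁) (A₃ - A₁)) • (x - A₃) =
      rt c b x := by
  rw [cross_sub_sub_rotate A₁ A₂ A₃, cross_swap (A₂ - A₁) (A₃ - A₁)]
  simp only [cross, PiLp.sub_apply] at hd
  ext i
  fin_cases i <;>
  · simp only [cross, rt, midpoint_eq_smul_add, invOf_eq_inv, PiLp.add_apply, PiLp.smul_apply,
      PiLp.sub_apply, smul_eq_mul, Fin.zero_eta, Fin.mk_one]
    field_simp
    ring

theorem rtInterp_inner_midpoint_eq {A₁ A₂ A₃ n₁ n₂ n₃ : V2}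
    (h₁₂ : A₁ ≠ A₂) (h₁₃ : A₁ ≠ A₃) (h₂₃ : A₂ ≠ A₃)
    (hn₁ : ‖n₁‖ = 1) (hn₁e : ⟪n₁, A₃ - A₂⟫ = 0) (hn₁o : ⟪n₁, A₁ - A₂⟫ < 0)
    (hn₂ : ‖n₂‖ = 1) (hn₂e : ⟪n₂, A₃ - A₁⟫ = 0) (hn₂o : ⟪n₂, A₂ - A₁⟫ < 0)
    (hn₃ : ‖n₃‖ = 1) (hn₃e : ⟪n₃, A₂ - A₁⟫ = 0) (hn₃o : ⟪n₃, A₃ - A₁⟫ < 0)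
    (c : V2) (b : ℝ) (x : V2) :
    rtInterp A₁ A₂ A₃ ⟪rt c b (midpoint ℝ A₂ A₃), n₁⟫ ⟪rt c b (midpoint ℝ A₁ A₃), n₂⟫
      ⟪rt c b (midpoint ℝ A₁ A₂), n₃⟫ x = rt c b x := by
  have harea := triArea_eq_abs_cross A₁ A₂ A₃
  have ha₁ : 2 * triArea A₁ A₂ A₃ = |cross (A₃ - A₂) (A₁ - A₂)| := by
    rw [harea, cross_sub_sub_rotate A₁ A₂ A₃]; ring
  have ha₂ : 2 * triArea A₁ A₂ A₃ = |cross (A₃ - A₁) (A₂ - A₁)| := by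
    rw [harea, cross_swap (A₂ - A₁) (A₃ - A₁), abs_neg]; ring
  have ha₃ : 2 * triArea A₁ A₂ A₃ = |cross (A₂ - A₁) (A₃ - A₁)| := by
    rw [harea]; ring
  simp only [rtInterp, lam1, lam2, lam3, inner_smul_scaled_eq h₂₃ hn₁ hn₁e hn₁o ha₁,
    inner_smul_scaled_eq h₁₃ hn₂ hn₂e hn₂o ha₂, inner_smul_scaled_eq h₁₂ hn₃ hn₃e hn₃o ha₃]
  exact rt_eq_sum_cross_smul (cross_ne_zero_of_outward_normal h₁₂ hn₃e hn₃o) c b x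

lemma lineInt_inner_rt (c : V2) (b : ℝ) (m P Q : V2) :
    lineInt (fun x => ⟪rt c b x, m⟫) P Q = ⟪rt c b (midpoint ℝ P Q), m⟫ * ‖Q - P‖ := by
  have hlin (s : ℝ) :
      ⟪rt c b (P + s • (Q - P)), m⟫ = ⟪rt c b P, m⟫ + s * (b * ⟪Q - P, m⟫) := by
    simp only [rt, inner_add_left, real_inner_smul_left]; ring
  have hmid : ⟪rt c b (midpoint ℝ P Q), m⟫ = ⟪rt c b P, m⟫ + 1 / 2 * (b * ⟪Q - P, m⟫) := by
    rw [← hlin]; congr 2; simp only [midpoint_eq_smul_add, invOf_eq_inv]; module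
  simp only [lineInt, hlin, hmid]
  rw [intervalIntegral.integral_add intervalIntegrable_const
    (intervalIntegral.intervalIntegrable_id.mul_const _)]
  simp [intervalIntegral.integral_mul_const, integral_id]
lemma lineInt_inner_rt_add_of_mem_segment (c : V2) (b : ℝ) (m : V2) {P Q D : V2}
    (hD : D ∈ segment ℝ P Q) :
    lineInt (fun x => ⟪rt c b x, m⟫) P D + lineInt (fun x => ⟪rt c b x, m⟫) D Q =
      lineInt (fun x => ⟪rt c b x, m⟫) P Q := by
  rw [segment_eq_image'] at hD
  obtain ⟨s, ⟨hs0, hs1⟩, rfl⟩ := hD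
  have hlin (τ : ℝ) :
      ⟪rt c b (P + τ • (Q - P)), m⟫ = ⟪rt c b P, m⟫ + τ * (b * ⟪Q - P, m⟫) := by
    simp only [rt, inner_add_left, real_inner_smul_left]; ring
  have hm₁ : midpoint ℝ P (P + s • (Q - P)) = P + (s / 2) • (Q - P) := by
    simp only [midpoint_eq_smul_add, invOf_eq_inv]; module
  have hm₂ : midpoint ℝ (P + s • (Q - P)) Q = P + ((1 + s) / 2) • (Q - P) := by
    simp only [midpoint_eq_smul_add, invOf_eq_inv]; module
  have hm₃ : midpoint ℝ P Q = P + (1 / 2 : ℝ) • (Q - P) := by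
    simp only [midpoint_eq_smul_add, invOf_eq_inv]; module
  have hPD : P + s • (Q - P) - P = s • (Q - P) := by abel
  have hDQ : Q - (P + s • (Q - P)) = (1 - s) • (Q - P) := by module
  simp only [lineInt_inner_rt, hm₁, hm₂, hm₃, hlin, hPD, hDQ, norm_smul, Real.norm_eq_abs,
    abs_of_nonneg hs0, abs_of_nonneg (sub_nonneg.mpr hs1)]
  ring

lemma dof1_eq {P Q D : V2} (hPQ : P ≠ Q) (hD : D ∈ segment ℝ P Q) (m c t : V2) (μ b : ℝ) :
    dof1 P Q D m (c + μ • t) b c b =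
      ⟪rt c b (midpoint ℝ P Q), m⟫ + μ * (‖Q - D‖ / ‖Q - P‖ * ⟪t, m⟫) := by
  have hQP : ‖Q - P‖ ≠ 0 := norm_ne_zero_iff.mpr (sub_ne_zero.mpr hPQ.symm)
  rw [dof1, lineInt_inner_rt (c + μ • t), rt_add_smul, inner_add_left, add_mul,
    ← lineInt_inner_rt c b m D Q, ← add_assoc, lineInt_inner_rt_add_of_mem_segment c b m hD,
    lineInt_inner_rt, real_inner_smul_left]
  field_simp

lemma dof2_eq_dof1 (P Q D m c₁ : V2) (b₁ : ℝ) (c₂ : V2) (b₂ : ℝ) :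
    dof2 P Q D m c₁ b₁ c₂ b₂ = dof1 P Q D m c₁ b₁ c₂ b₂ := rfl

lemma dof3_eq {P Q : V2} (hPQ : P ≠ Q) (m c : V2) (b : ℝ) :
    dof3 P Q m c b = ⟪rt c b (midpoint ℝ P Q), m⟫ := by
  have hQP : ‖Q - P‖ ≠ 0 := norm_ne_zero_iff.mpr (sub_ne_zero.mpr hPQ.symm)
  rw [dof3, lineInt_inner_rt]
  field_simp

theorem stmt13_general (A₁ A₂ A₃ D E t n xT n₁ n₂ n₃ : V2)
    (hA : AffineIndependent ℝ ![A₁, A₂, A₃])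
    (hD : D ∈ openSegment ℝ A₂ A₃) (hE : E ∈ openSegment ℝ A₁ A₃)
    (ht : ‖t‖ = 1)
    (hn : ‖n‖ = 1) (hnt : ⟪n, t⟫ = 0)
    (hn₁ : ‖n₁‖ = 1) (hn₁e : ⟪n₁, A₃ - A₂⟫ = 0) (hn₁o : ⟪n₁, A₁ - A₂⟫ < 0)
    (hn₂ : ‖n₂‖ = 1) (hn₂e : ⟪n₂, A₃ - A₁⟫ = 0) (hn₂o : ⟪n₂, A₂ - A₁⟫ < 0)
    (hn₃ : ‖n₃‖ = 1) (hn₃e : ⟪n₃, A₂ - A₁⟫ = 0) (hn₃o : ⟪n₃, A₃ - A₁⟫ < 0)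
    (c₁ c₂ : V2) (b₁ b₂ : ℝ)
    (hjumpn : ∀ x ∈ segment ℝ D E, ⟪rt c₁ b₁ x - rt c₂ b₂ x, n⟫ = 0)
    (hdiv : 2 * b₁ = 2 * b₂) :
    (∀ x, rt c₁ b₁ x =
        rtInterp A₁ A₂ A₃ (dof1 A₂ A₃ D n₁ c₁ b₁ c₂ b₂) (dof2 A₁ A₃ E n₂ c₁ b₁ c₂ b₂)
            (dof3 A₁ A₂ n₃ c₂ b₂) x +
          ⟪rt c₁ b₁ xT - rt c₂ b₂ xT, t⟫ • (t - piOmega A₁ A₂ A₃ D E t n₁ n₂ x)) ∧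
      ∀ x, rt c₂ b₂ x =
        rtInterp A₁ A₂ A₃ (dof1 A₂ A₃ D n₁ c₁ b₁ c₂ b₂) (dof2 A₁ A₃ E n₂ c₁ b₁ c₂ b₂)
            (dof3 A₁ A₂ n₃ c₂ b₂) x +
          ⟪rt c₁ b₁ xT - rt c₂ b₂ xT, t⟫ • (0 - piOmega A₁ A₂ A₃ D E t n₁ n₂ x) := by
  obtain rfl : b₂ = b₁ := by linarith
  generalize hμ : ⟪rt c₁ b₂ xT - rt c₂ b₂ xT, t⟫ = μ
  obtain rfl : c₁ = c₂ + μ • t := by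
    have hperp : ⟪c₁ - c₂, n⟫ = 0 := by
      simpa only [rt_sub_rt] using hjumpn D (left_mem_segment ℝ D E)
    rw [← hμ, rt_sub_rt, ← eq_inner_smul_of_inner_eq_zero finrank_euclideanSpace_fin ht hn
      (by rwa [real_inner_comm]) hperp, add_sub_cancel]
  obtain ⟨h₁₂, h₁₃, h₂₃⟩ := ne_ne_ne_of_affineIndependent hA
  have hφ₂ (x : V2) : rt c₂ b₂ x =
      rtInterp A₁ A₂ A₃ (dof1 A₂ A₃ D n₁ (c₂ + μ • t) b₂ c₂ b₂)
          (dof2 A₁ A₃ E n₂ (c₂ + μ • t) b₂ c₂ b₂) (dof3 A₁ A₂ n₃ c₂ b₂) x +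
        μ • (0 - piOmega A₁ A₂ A₃ D E t n₁ n₂ x) := by
    rw [dof2_eq_dof1, dof1_eq h₂₃ (openSegment_subset_segment ℝ _ _ hD),
      dof1_eq h₁₃ (openSegment_subset_segment ℝ _ _ hE), dof3_eq h₁₂,
      ← rtInterp_inner_midpoint_eq h₁₂ h₁₃ h₂₃ hn₁ hn₁e hn₁o hn₂ hn₂e hn₂o hn₃ hn₃e hn₃o c₂ b₂ x]
    simp only [rtInterp, piOmega]
    module
  refine ⟨fun x => ?_, hφ₂⟩
  rw [rt_add_smul, hφ₂ x]
  module

/-- The unnumbered decomposition Lemma of Section 4.1: if the pair `(φ₁, φ₂)` has zero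
normal jump on `[D, E]` and equal divergences, and `μ = ⟨φ₁(x_T) - φ₂(x_T), t⟩`, then
`φ_s = Σᵢ Nᵢ(φ) λᵢ + μ (ω_s - Πω)` for `s = 1, 2`. -/
theorem stmt13 (A₁ A₂ A₃ D E t n xT n₁ n₂ n₃ : V2)
    (hA : AffineIndependent ℝ ![A₁, A₂, A₃])
    (hD : D ∈ openSegment ℝ A₂ A₃) (hE : E ∈ openSegment ℝ A₁ A₃)
    (ht : ‖t‖ = 1) (htpar : ∃ c : ℝ, D - E = c • t)
    (hn : ‖n‖ = 1) (hnt : ⟪n, t⟫ = 0)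
    (hxT : xT ∈ segment ℝ D E)
    (hn₁ : ‖n₁‖ = 1) (hn₁e : ⟪n₁, A₃ - A₂⟫ = 0) (hn₁o : ⟪n₁, A₁ - A₂⟫ < 0)
    (hn₂ : ‖n₂‖ = 1) (hn₂e : ⟪n₂, A₃ - A₁⟫ = 0) (hn₂o : ⟪n₂, A₂ - A₁⟫ < 0)
    (hn₃ : ‖n₃‖ = 1) (hn₃e : ⟪n₃, A₂ - A₁⟫ = 0) (hn₃o : ⟪n₃, A₃ - A₁⟫ < 0)
    (c₁ c₂ : V2) (b₁ b₂ : ℝ)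
    (hjumpn : ∀ x ∈ segment ℝ D E, ⟪rt c₁ b₁ x - rt c₂ b₂ x, n⟫ = 0)
    (hdiv : 2 * b₁ = 2 * b₂) :
    (∀ x, rt c₁ b₁ x =
        rtInterp A₁ A₂ A₃ (dof1 A₂ A₃ D n₁ c₁ b₁ c₂ b₂) (dof2 A₁ A₃ E n₂ c₁ b₁ c₂ b₂)
            (dof3 A₁ A₂ n₃ c₂ b₂) x +
          ⟪rt c₁ b₁ xT - rt c₂ b₂ xT, t⟫ • (t - piOmega A₁ A₂ A₃ D E t n₁ n₂ x)) ∧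
      ∀ x, rt c₂ b₂ x =
        rtInterp A₁ A₂ A₃ (dof1 A₂ A₃ D n₁ c₁ b₁ c₂ b₂) (dof2 A₁ A₃ E n₂ c₁ b₁ c₂ b₂)
            (dof3 A₁ A₂ n₃ c₂ b₂) x +
          ⟪rt c₁ b₁ xT - rt c₂ b₂ xT, t⟫ • (0 - piOmega A₁ A₂ A₃ D E t n₁ n₂ x) :=
  stmt13_general A₁ A₂ A₃ D E t n xT n₁ n₂ n₃ hA hD hE ht hn hnt hn₁ hn₁e hn₁o hn₂ hn₂e hn₂o hn₃
    hn₃e hn₃o c₁ c₂ b₁ b₂ hjumpn hdiv
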